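/- Define χ_n(2) = (n-1)! ∑_{k=0}^{n+2} ((-1)^{k-1} B_k B_{n+2-k})/(k!(n+2-k)!) 2^{k-n/2-1}. Then for g ≥ 1: χ_{2g-1}(2) = √2 · 2^{-g} · (2^{2g-2} - 1/2) B_{2g} / (2g(2g-1)), and χ_{2g-2}(2) = 2^{-g} · χ_{2g-2}(1) (where for g=1 one interprets χ_0(β) = -1/4 + β^{-1}/12 + β/12). -/

import Mathlib

/-!
With `A(s) = s/(e^s - 1)`, `χ_n(β)` for `n ≥ 1` is `-(n-1)! β^{-(n+2)/2}` times the coefficient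
of `s^{n+2}` in `A(-βs) A(s)`. Writing `A = (D - s)/2` with the even series `D(s) = s coth(s/2)`,
`4 A(-βs) A(s) = D(βs) D(s) + s (β D(s) - D(βs)) - β s²`, so an odd coefficient only sees
`s (β D(s) - D(βs))`, i.e. a single Bernoulli number. For even coefficients, the duplication
formula for `coth`, in the form `D(2s) D(s) = D(s)² + s²`, makes `A(-2s) A(s) - A(-s) A(s)` odd.
-/

/-- The parameterized Euler characters: `χ_0(β) = -1/4 + 1/(12β) + β/12`, and for `n ≥ 1`
`χ_n(β) = (n-1)! ∑_{k=0}^{n+2} ((-1)^{k-1} B_k B_{n+2-k})/(k!(n+2-k)!) β^{k-n/2-1}`. -/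
noncomputable def parEuler (B : ℕ → ℚ) (β : ℝ) : ℕ → ℝ
  | 0 => -1 / 4 + 1 / (12 * β) + β / 12
  | n + 1 =>
      (n.factorial : ℝ) *
        ∑ k ∈ Finset.range (n + 4),
          (-1 : ℝ) ^ ((k : ℤ) - 1) * (B k : ℝ) * (B (n + 3 - k) : ℝ)
            / ((k.factorial : ℝ) * ((n + 3 - k).factorial : ℝ))
            * β ^ ((k : ℝ) - ((n : ℝ) + 1) / 2 - 1)

open PowerSeries
open scoped Nat

namespace PowerSeries

theorem exp_sub_one_ne_zero {A : Type*} [CommRing A] [Algebra ℚ A] [Nontrivial A] :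
    exp A - 1 ≠ 0 := by
  intro h
  simpa using congrArg (coeff 1) h

theorem rescale_neg_one_rescale {R : Type*} [CommRing R] (a : R) (f : R⟦X⟧) :
    rescale (-1) (rescale a f) = rescale a (rescale (-1) f) := by
  rw [rescale_rescale, rescale_rescale, mul_comm]

variable {K : Type*} [Field K] [CharZero K]

variable (K) in
/-- `s coth(s/2) = s (e^s + 1)/(e^s - 1)`. -/
noncomputable def cothSeries : K⟦X⟧ := 2 * bernoulliPowerSeries K + X

theorem cothSeries_mul_exp_sub_one : cothSeries K * (exp K - 1) = X * (exp K + 1) := by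
  rw [cothSeries]
  linear_combination 2 * bernoulliPowerSeries_mul_exp_sub_one K

theorem rescale_neg_one_cothSeries : rescale (-1) (cothSeries K) = cothSeries K := by
  have h := congrArg (rescale (-1 : K)) (cothSeries_mul_exp_sub_one (K := K))
  rw [map_mul, map_mul, map_sub, map_add, map_one, rescale_neg_one_X] at h
  have hinv : exp K * rescale (-1) (exp K) = 1 := exp_mul_exp_neg_eq_one
  refine mul_right_cancel₀ (exp_sub_one_ne_zero (A := K)) ?_
  linear_combination (-exp K) * h + (X + rescale (-1) (cothSeries K)) * hinv
    - cothSeries_mul_exp_sub_one (K := K)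

theorem rescale_two_cothSeries_mul : rescale 2 (cothSeries K) * cothSeries K
    = cothSeries K ^ 2 + X ^ 2 := by
  have h := congrArg (rescale (2 : K)) (cothSeries_mul_exp_sub_one (K := K))
  have hsq : exp K ^ 2 = rescale 2 (exp K) := by
    simpa using exp_pow_eq_rescale_exp (A := K) 2
  rw [map_mul, map_mul, map_sub, map_add, map_one, rescale_X, map_ofNat, ← hsq] at h
  have hne : (exp K - 1) ^ 2 * (exp K + 1) ≠ 0 := by
    refine mul_ne_zero (pow_ne_zero _ exp_sub_one_ne_zero) fun h1 => ?_
    simpa using congrArg (coeff 0) h1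
  refine mul_right_cancel₀ hne ?_
  linear_combination (exp K - 1) * cothSeries K * h
    + (2 * X * (exp K ^ 2 + 1) - (exp K + 1) * (cothSeries K * (exp K - 1) + X * (exp K + 1)))
      * cothSeries_mul_exp_sub_one (K := K)

theorem coeff_eq_zero_of_rescale_neg_one_eq_self {f : K⟦X⟧} (hf : rescale (-1) f = f) {n : ℕ}
    (hn : Odd n) : coeff n f = 0 := by
  have h := congrArg (coeff n) hf
  rw [coeff_rescale, hn.neg_one_pow] at h
  linear_combination -h / 2

theorem coeff_eq_zero_of_rescale_neg_one_eq_neg {f : K⟦X⟧} (hf : rescale (-1) f = -f) {n : ℕ}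
    (hn : Even n) : coeff n f = 0 := by
  have h := congrArg (coeff n) hf
  rw [coeff_rescale, hn.neg_one_pow, map_neg] at h
  linear_combination h / 2

theorem four_mul_rescale_neg_bernoulliPowerSeries_mul (β : K) :
    4 * (rescale (-β) (bernoulliPowerSeries K) * bernoulliPowerSeries K)
      = rescale β (cothSeries K) * cothSeries K
        + X * (C β * cothSeries K - rescale β (cothSeries K)) - C β * X ^ 2 := by
  have hA : 2 * bernoulliPowerSeries K = cothSeries K - X := by
    rw [cothSeries]; ring
  have hA' : 2 * rescale (-β) (bernoulliPowerSeries K) = rescale β (cothSeries K) + C β * X := by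
    have hD : rescale (-β) (cothSeries K) = rescale β (cothSeries K) := by
      rw [show -β = -1 * β by ring, ← rescale_rescale, rescale_neg_one_cothSeries]
    have h := congrArg (rescale (-β)) hA
    rwa [map_mul, map_sub, map_ofNat, rescale_X, map_neg, neg_mul, sub_neg_eq_add, hD] at h
  linear_combination (2 * bernoulliPowerSeries K) * hA'
    + (rescale β (cothSeries K) + C β * X) * hA

theorem coeff_odd_rescale_neg_bernoulliPowerSeries_mul (β : K) (j : ℕ) :
    coeff (2 * j + 3) (rescale (-β) (bernoulliPowerSeries K) * bernoulliPowerSeries K)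
      = (β - β ^ (2 * j + 2)) / 2 * algebraMap ℚ K (bernoulli (2 * j + 2) / (2 * j + 2)!) := by
  have h := congrArg (coeff (2 * j + 3)) (four_mul_rescale_neg_bernoulliPowerSeries_mul β)
  have hodd : coeff (2 * j + 3) (rescale β (cothSeries K) * cothSeries K) = 0 := by
    refine coeff_eq_zero_of_rescale_neg_one_eq_self ?_ ⟨j + 1, by ring⟩
    rw [map_mul, rescale_neg_one_rescale, rescale_neg_one_cothSeries]
  rw [← map_ofNat C, coeff_C_mul, map_sub, map_add, hodd, coeff_C_mul, pow_two,
    show 2 * j + 3 = (2 * j + 2) + 1 by ring, coeff_succ_X_mul, coeff_succ_X_mul,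
    map_sub, coeff_C_mul, coeff_rescale, coeff_X, if_neg (by omega)] at h
  have hD : coeff (2 * j + 2) (cothSeries K)
      = 2 * algebraMap ℚ K (bernoulli (2 * j + 2) / (2 * j + 2)!) := by
    rw [cothSeries, map_add, ← map_ofNat C, coeff_C_mul, coeff_X, if_neg (by omega),
      bernoulliPowerSeries, coeff_mk, add_zero]
  rw [hD] at h
  linear_combination h / 4

theorem coeff_even_rescale_neg_two_bernoulliPowerSeries_mul {n : ℕ} (hn : Even n) :
    coeff n (rescale (-2) (bernoulliPowerSeries K) * bernoulliPowerSeries K)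
      = coeff n (rescale (-1) (bernoulliPowerSeries K) * bernoulliPowerSeries K) := by
  have h2 := four_mul_rescale_neg_bernoulliPowerSeries_mul (2 : K)
  have h1 := four_mul_rescale_neg_bernoulliPowerSeries_mul (1 : K)
  rw [rescale_one, map_one, RingHom.id_apply, one_mul] at h1
  rw [map_ofNat] at h2
  have hdiff : 4 * (rescale (-2) (bernoulliPowerSeries K) * bernoulliPowerSeries K
      - rescale (-1) (bernoulliPowerSeries K) * bernoulliPowerSeries K)
      = X * (2 * cothSeries K - rescale 2 (cothSeries K)) := by
    linear_combination h2 - h1 + rescale_two_cothSeries_mul (K := K)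
  have hodd : rescale (-1) (X * (2 * cothSeries K - rescale 2 (cothSeries K)))
      = -(X * (2 * cothSeries K - rescale 2 (cothSeries K))) := by
    rw [map_mul, map_sub, map_mul, map_ofNat, rescale_neg_one_X, rescale_neg_one_rescale,
      rescale_neg_one_cothSeries, neg_mul]
  have h := congrArg (coeff n) hdiff
  rw [← map_ofNat C, coeff_C_mul, map_sub, coeff_eq_zero_of_rescale_neg_one_eq_neg hodd hn] at h
  linear_combination h / 4

end PowerSeries

theorem eq_bernoulli_of_mk_mul_one_sub_exp (B : ℕ → ℚ)
    (hB : mk (fun m => -(B m / m !)) * (1 - exp ℚ) = X) : B = bernoulli := by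
  have hneg : mk (fun m => -(B m / m !)) = -mk fun m => B m / m ! := by
    ext m; simp
  have hseries : mk (fun m => B m / m !) = bernoulliPowerSeries ℚ := by
    refine mul_right_cancel₀ exp_sub_one_ne_zero ?_
    linear_combination hB - (1 - exp ℚ) * hneg - bernoulliPowerSeries_mul_exp_sub_one ℚ
  funext m
  have h := congrArg (coeff m) hseries
  rw [coeff_mk, bernoulliPowerSeries, coeff_mk, Algebra.algebraMap_self, RingHom.id_apply] at h
  exact (div_left_inj' (by positivity)).mp h

theorem parEuler_bernoulli_succ {β : ℝ} (hβ : 0 < β) (n : ℕ) :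
    parEuler bernoulli β (n + 1) = -(n ! : ℝ) * β ^ (-((n : ℝ) + 3) / 2)
      * coeff (n + 3) (rescale (-β) (bernoulliPowerSeries ℝ) * bernoulliPowerSeries ℝ) := by
  rw [parEuler, coeff_mul, Finset.Nat.sum_antidiagonal_eq_sum_range_succ_mk, Finset.mul_sum,
    Finset.mul_sum]
  refine Finset.sum_congr rfl fun k _ => ?_
  have hpow : β ^ ((k : ℝ) - ((n : ℝ) + 1) / 2 - 1) = β ^ k * β ^ (-((n : ℝ) + 3) / 2) := by
    rw [← Real.rpow_natCast, ← Real.rpow_add hβ]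
    ring_nf
  have hsign : (-1 : ℝ) ^ ((k : ℤ) - 1) = -(-1) ^ k := by
    rw [zpow_sub₀ (by norm_num), zpow_natCast, zpow_one, div_neg, div_one]
  simp only [coeff_rescale, bernoulliPowerSeries, coeff_mk, eq_ratCast]
  rw [hpow, hsign, neg_pow β]
  push_cast
  ring

theorem parEuler_bernoulli_two_odd {g : ℕ} (hg : 1 ≤ g) :
    parEuler bernoulli 2 (2 * g - 1)
      = √2 * (2 : ℝ) ^ (-(g : ℤ)) * ((2 : ℝ) ^ (2 * g - 2) - 1 / 2)
        * (bernoulli (2 * g) : ℝ) / ((2 * g : ℝ) * ((2 * g : ℝ) - 1)) := by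
  obtain ⟨j, rfl⟩ : ∃ j, g = j + 1 := ⟨g - 1, by omega⟩
  rw [show 2 * (j + 1) - 1 = 2 * j + 1 by omega, parEuler_bernoulli_succ two_pos,
    coeff_odd_rescale_neg_bernoulliPowerSeries_mul, show 2 * (j + 1) - 2 = 2 * j by omega,
    show 2 * (j + 1) = 2 * j + 2 by ring]
  have hrpow : (2 : ℝ) ^ (-(((2 * j : ℕ) : ℝ) + 3) / 2) = √2 / 2 ^ (j + 2) := by
    rw [Real.sqrt_eq_rpow, ← Real.rpow_natCast, ← Real.rpow_sub two_pos]
    push_cast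
    ring_nf
  have hfact : ((2 * j + 2)! : ℝ) = (2 * j + 2) * (2 * j + 1) * (2 * j)! := by
    rw [Nat.factorial_succ, Nat.factorial_succ]
    push_cast
    ring
  have hj : (2 * ((j : ℝ) + 1) - 1) ≠ 0 := by linarith [(j.cast_nonneg : (0 : ℝ) ≤ j)]
  rw [hrpow, zpow_neg, zpow_natCast, eq_ratCast]
  push_cast [hfact]
  field_simp
  ring

theorem parEuler_bernoulli_two_even {g : ℕ} (hg : 1 ≤ g) :
    parEuler bernoulli 2 (2 * g - 2) = (2 : ℝ) ^ (-(g : ℤ)) * parEuler bernoulli 1 (2 * g - 2) := by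
  obtain _ | _ | i := g
  · omega
  · norm_num [parEuler]
  rw [show 2 * (i + 2) - 2 = 2 * i + 1 + 1 by omega, parEuler_bernoulli_succ two_pos,
    parEuler_bernoulli_succ one_pos,
    coeff_even_rescale_neg_two_bernoulliPowerSeries_mul ⟨i + 2, by ring⟩, Real.one_rpow]
  have hrpow : (2 : ℝ) ^ (-(((2 * i + 1 : ℕ) : ℝ) + 3) / 2) = 2 ^ (-((i + 2 : ℕ) : ℤ)) := by
    rw [← Real.rpow_intCast]
    push_cast
    ring_nf
  rw [hrpow]
  ring

/-- At `β = 2`, for `g ≥ 1`: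
`χ_{2g-1}(2) = √2 · 2^{-g} (2^{2g-2} - 1/2) B_{2g}/(2g(2g-1))` and
`χ_{2g-2}(2) = 2^{-g} χ_{2g-2}(1)`, with Bernoulli numbers in the convention
`s/(1-e^s) = -∑ B_m s^m/m!`. -/
theorem parEuler_beta_two (B : ℕ → ℚ)
    (hB : (PowerSeries.mk fun m => -(B m / (m.factorial : ℚ))) *
        (1 - PowerSeries.exp ℚ) = PowerSeries.X) :
    ∀ g : ℕ, 1 ≤ g →
      parEuler B 2 (2 * g - 1)
          = Real.sqrt 2 * (2 : ℝ) ^ (-(g : ℤ)) * ((2 : ℝ) ^ (2 * g - 2) - 1 / 2)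
            * (B (2 * g) : ℝ) / ((2 * g : ℝ) * ((2 * g : ℝ) - 1))
      ∧ parEuler B 2 (2 * g - 2) = (2 : ℝ) ^ (-(g : ℤ)) * parEuler B 1 (2 * g - 2) := by
  obtain rfl := eq_bernoulli_of_mk_mul_one_sub_exp B hB
  exact fun g hg => ⟨parEuler_bernoulli_two_odd hg, parEuler_bernoulli_two_even hg⟩
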